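/- For integers p, q ≥ 2, the fall-spectrum of the direct product K_p × K_q equals {p, q}. -/

import Mathlib

/-- Direct (tensor) product of simple graphs. -/
def tensorProd {α β : Type*} (G : SimpleGraph α) (H : SimpleGraph β) : SimpleGraph (α × β) where
  Adj a b := G.Adj a.1 b.1 ∧ H.Adj a.2 b.2
  symm := ⟨by rintro a b ⟨h1, h2⟩; exact ⟨h1.symm, h2.symm⟩⟩
  loopless := ⟨by rintro a ⟨h, -⟩; exact h.ne rfl⟩

/-- A fall-coloring with `k` colors: a proper coloring in which every vertex is a b-vertex. -/
def IsFallColoring {α : Type*} (G : SimpleGraph α) (k : ℕ) (f : α → Fin k) : Prop :=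
  (∀ ⦃a b⦄, G.Adj a b → f a ≠ f b) ∧
  ∀ a : α, ∀ c : Fin k, c ≠ f a → ∃ b, G.Adj a b ∧ f b = c

/-!
In a fall-coloring of `K_p × K_q` every color class is independent, so any two of its vertices
share a row or a column, and dominating, since every other vertex sees the class. A class holding
two vertices of one row therefore is that whole row, and a class meeting a row in a single vertex
is forced into a column. A row class and a column class would meet, so either all classes are
rows, giving `p` colors, or all are columns, giving `q`. Conversely, coloring by the row (or
the column) index is a fall-coloring.
-/

section

variable {α β : Type*} {k : ℕ}

@[simp]
lemma tensorProd_top_top_adj {a b : α × β} :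
    (tensorProd (⊤ : SimpleGraph α) (⊤ : SimpleGraph β)).Adj a b ↔ a.1 ≠ b.1 ∧ a.2 ≠ b.2 :=
  Iff.rfl

def tensorProdComm (G : SimpleGraph α) (H : SimpleGraph β) : tensorProd G H ≃g tensorProd H G :=
  ⟨Equiv.prodComm α β, and_comm⟩

lemma IsFallColoring.comp_iso {G : SimpleGraph α} {H : SimpleGraph β} {f : β → Fin k}
    (hf : IsFallColoring H k f) (e : G ≃g H) : IsFallColoring G k (f ∘ e) := by
  refine ⟨fun a b hab => hf.1 (e.map_adj_iff.mpr hab), fun a c hc => ?_⟩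
  obtain ⟨b, hab, hfb⟩ := hf.2 (e a) c hc
  exact ⟨e.symm b, e.map_adj_iff.mp (by simpa using hab), by simpa using hfb⟩

lemma IsFallColoring.swap {G : SimpleGraph α} {H : SimpleGraph β} {f : α × β → Fin k}
    (hf : IsFallColoring (tensorProd G H) k f) :
    IsFallColoring (tensorProd H G) k (f ∘ Prod.swap) :=
  hf.comp_iso (tensorProdComm H G)

lemma IsFallColoring.surjective [Nonempty α] {G : SimpleGraph α} {f : α → Fin k}
    (hf : IsFallColoring G k f) : Function.Surjective f := by
  intro c
  obtain a : α := Classical.arbitrary α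
  by_cases hc : c = f a
  · exact ⟨a, hc.symm⟩
  · obtain ⟨b, -, hb⟩ := hf.2 a c hc
    exact ⟨b, hb⟩

def ClassIsRow {γ : Type*} (f : α × β → γ) (a : α × β) : Prop :=
  ∀ x, f x = f a ↔ x.1 = a.1

def ClassIsColumn {γ : Type*} (f : α × β → γ) (a : α × β) : Prop :=
  ∀ x, f x = f a ↔ x.2 = a.2

lemma classIsColumn_iff_classIsRow_swap {γ : Type*} {f : α × β → γ} {a : α × β} :
    ClassIsColumn f a ↔ ClassIsRow (f ∘ Prod.swap) a.swap :=
  ⟨fun h x => h x.swap, fun h x => h x.swap⟩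

lemma isFallColoring_fst [Nontrivial β] (e : α ≃ Fin k) :
    IsFallColoring (tensorProd (⊤ : SimpleGraph α) (⊤ : SimpleGraph β)) k (fun x => e x.1) := by
  refine ⟨fun a b hab => e.injective.ne (tensorProd_top_top_adj.mp hab).1, fun a c hc => ?_⟩
  obtain ⟨j, hj⟩ := exists_ne a.2
  exact ⟨(e.symm c, j), ⟨fun h => hc (by simp [h]), hj.symm⟩, by simp⟩

lemma isFallColoring_snd [Nontrivial α] (e : β ≃ Fin k) :
    IsFallColoring (tensorProd (⊤ : SimpleGraph α) (⊤ : SimpleGraph β)) k (fun x => e x.2) :=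
  (isFallColoring_fst e).swap

namespace IsFallColoring

variable {f : α × β → Fin k}

lemma fst_eq_or_snd_eq (hf : IsFallColoring (tensorProd ⊤ ⊤) k f) {a b : α × β}
    (hab : f a = f b) : a.1 = b.1 ∨ a.2 = b.2 := by
  by_contra! h
  exact hf.1 (tensorProd_top_top_adj.mpr h) hab

lemma classIsRow_of_eq (hf : IsFallColoring (tensorProd ⊤ ⊤) k f) {a b : α × β}
    (hab : f a = f b) (h1 : a.1 = b.1) (h2 : a.2 ≠ b.2) : ClassIsRow f a := by
  have hsub : ∀ x, f x = f a → x.1 = a.1 := by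
    intro x hx
    rcases hf.fst_eq_or_snd_eq hx with hxa | hxa
    · exact hxa
    rcases hf.fst_eq_or_snd_eq (hx.trans hab) with hxb | hxb
    · exact hxb.trans h1.symm
    · exact absurd (hxa.symm.trans hxb) h2
  refine fun x => ⟨hsub x, fun hx => ?_⟩
  by_contra hne
  -- `x` sees the class of `a`, but that class lies in the row of `x`
  obtain ⟨y, hxy, hy⟩ := hf.2 x (f a) (Ne.symm hne)
  exact (tensorProd_top_top_adj.mp hxy).1 (hx.trans (hsub y hy).symm)

lemma classIsColumn_of_eq (hf : IsFallColoring (tensorProd ⊤ ⊤) k f) {a b : α × β}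
    (hab : f a = f b) (h2 : a.2 = b.2) (h1 : a.1 ≠ b.1) : ClassIsColumn f a :=
  classIsColumn_iff_classIsRow_swap.mpr (hf.swap.classIsRow_of_eq (b := b.swap) hab h2 h1)

lemma classIsRow_or_classIsColumn [Nontrivial β] (hf : IsFallColoring (tensorProd ⊤ ⊤) k f)
    (a : α × β) : ClassIsRow f a ∨ ClassIsColumn f a := by
  obtain ⟨j, hj⟩ := exists_ne a.2
  by_cases hrow : f (a.1, j) = f a
  · exact .inl (hf.classIsRow_of_eq hrow.symm rfl hj.symm)
  · obtain ⟨y, hy, hfy⟩ := hf.2 (a.1, j) (f a) (Ne.symm hrow)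
    have h1 : a.1 ≠ y.1 := (tensorProd_top_top_adj.mp hy).1
    have h2 : a.2 = y.2 := (hf.fst_eq_or_snd_eq hfy.symm).resolve_left h1
    exact .inr (hf.classIsColumn_of_eq hfy.symm h2 h1)

lemma classIsRow_of_classIsRow [Nontrivial β] (hf : IsFallColoring (tensorProd ⊤ ⊤) k f)
    {a : α × β} (ha : ClassIsRow f a) (b : α × β) : ClassIsRow f b := by
  refine (hf.classIsRow_or_classIsColumn b).resolve_right fun hb => ?_
  -- the row class of `a` and the column class of `b` share the vertex `(a.1, b.2)`
  have hab : f a = f b := ((ha (a.1, b.2)).mpr rfl).symm.trans ((hb (a.1, b.2)).mpr rfl)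
  obtain ⟨j, hj⟩ := exists_ne b.2
  exact hj ((hb (a.1, j)).mp (((ha (a.1, j)).mpr rfl).trans hab))

lemma card_eq_of_classIsRow [Fintype α] [Nontrivial β]
    (hf : IsFallColoring (tensorProd ⊤ ⊤) k f) {a : α × β} (ha : ClassIsRow f a) :
    Fintype.card α = k := by
  have : Nonempty (α × β) := ⟨a⟩
  have hrows := hf.classIsRow_of_classIsRow ha
  have hbij : Function.Bijective fun i => f (i, a.2) := by
    refine ⟨fun i i' h => (hrows (i', a.2) (i, a.2)).mp h, fun c => ?_⟩
    obtain ⟨x, rfl⟩ := hf.surjective c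
    exact ⟨x.1, (hrows x (x.1, a.2)).mpr rfl⟩
  simpa using Fintype.card_of_bijective hbij

lemma card_eq_or_card_eq [Fintype α] [Fintype β] [Nontrivial α] [Nontrivial β]
    (hf : IsFallColoring (tensorProd ⊤ ⊤) k f) :
    Fintype.card α = k ∨ Fintype.card β = k := by
  obtain ⟨a⟩ : Nonempty (α × β) := inferInstance
  rcases hf.classIsRow_or_classIsColumn a with ha | ha
  · exact .inl (hf.card_eq_of_classIsRow ha)
  · exact .inr (hf.swap.card_eq_of_classIsRow (classIsColumn_iff_classIsRow_swap.mp ha))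

end IsFallColoring

end

theorem stmt16 (p q : ℕ) (hp : 2 ≤ p) (hq : 2 ≤ q) (k : ℕ) :
    (∃ f : Fin p × Fin q → Fin k,
      IsFallColoring (tensorProd (⊤ : SimpleGraph (Fin p)) (⊤ : SimpleGraph (Fin q))) k f) ↔
    (k = p ∨ k = q) := by
  have : Nontrivial (Fin p) := Fin.nontrivial_iff_two_le.mpr hp
  have : Nontrivial (Fin q) := Fin.nontrivial_iff_two_le.mpr hq
  constructor
  · rintro ⟨f, hf⟩
    simpa [eq_comm] using hf.card_eq_or_card_eq
  · rintro (rfl | rfl)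
    · exact ⟨_, isFallColoring_fst (Equiv.refl _)⟩
    · exact ⟨_, isFallColoring_snd (Equiv.refl _)⟩
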